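/- Let (P, ≼, ∧, ∨) be a locally finite lattice with least element 0̂, let f be a semimultiplicative complex-valued function on P with f(x) ≠ 0 for all x ∈ P, and let S = {x_1, …, x_n} be a finite lower closed subset of P with distinct elements, indexed so that x_i ≼ x_j only if i ≤ j. Assume d_i = ∑_{z ≼ x_i, z ⋠ x_j for all j < i} (f_d * μ)(0̂, z) ≠ 0 for all i. Then every (S)_f-eigenvalue λ ∈ ℂ of [S]_f lies in at least one of the n disks {z ∈ ℂ : |z − d_i⁻¹ ∑_{α,β=1}^n μ(x_α, x_i) μ(x_β, x_i) f(x_α ∨ x_β)| ≤ |d_i|⁻¹ ∑_{j≠i} |∑_{α,β=1}^n μ(x_α, x_i) μ(x_β, x_j) f(x_α ∨ x_β)|}, i ∈ {1, …, n}. -/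

import Mathlib

/-!
Write `E i k = [x k ≤ x i]` and `N i k = μ(x k, x i)`. Because `S` is lower closed, sums over
`{k | x k ≤ p}` with `p ∈ S` are sums over `[0̂, p]`, so `E * N = 1` and Möbius inversion gives
`(S)_f = E * Δ * Eᵀ` with `Δ = diag((f_d * μ)(0̂, x i))`; the indexing makes `d i` that same
diagonal entry. With `u = Eᵀ v`, the pencil equation `[S]_f v = λ (S)_f v` becomes
`N [S]_f Nᵀ u = λ Δ u`, so `λ` is an eigenvalue of `Δ⁻¹ N [S]_f Nᵀ`, whose `(i, j)` entry is
`d i⁻¹ ∑_{α,β} μ(x α, x i) μ(x β, x j) f(x α ∨ x β)`. Gershgorin's circle theorem concludes.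
-/

open Finset Matrix

section Mobius

variable {P R : Type*} [PartialOrder P] [LocallyFiniteOrder P] [CommRing R] {mu : P → P → R}

theorem sum_Icc_mobius [DecidableEq P] (hmu_self : ∀ p, mu p p = 1)
    (hmu_lt : ∀ p q : P, p < q → mu p q = -∑ r ∈ Ico p q, mu p r) {p q : P} (hpq : p ≤ q) :
    ∑ z ∈ Icc p q, mu p z = if p = q then 1 else 0 := by
  rcases hpq.eq_or_lt with rfl | hlt
  · simp [hmu_self]
  · rw [if_neg hlt.ne, ← Ico_insert_right hpq, sum_insert right_notMem_Ico, hmu_lt p q hlt,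
      neg_add_cancel]

theorem sum_Icc_sum_Icc_mul_mobius (hmu_self : ∀ p, mu p p = 1)
    (hmu_lt : ∀ p q : P, p < q → mu p q = -∑ r ∈ Ico p q, mu p r) (f : P → R) {a y : P}
    (hay : a ≤ y) :
    ∑ z ∈ Icc a y, ∑ w ∈ Icc a z, f w * mu w z = f y := by
  classical
  rw [sum_comm' (t' := Icc a y) (s' := fun w => Icc w y) fun z w => by
    simp only [mem_Icc]
    constructor
    · rintro ⟨⟨-, hzy⟩, haw, hwz⟩; exact ⟨⟨hwz, hzy⟩, haw, hwz.trans hzy⟩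
    · rintro ⟨⟨hwz, hzy⟩, haw, -⟩; exact ⟨⟨haw.trans hwz, hzy⟩, haw, hwz⟩]
  simp_rw [← mul_sum]
  rw [sum_congr rfl fun w hw => by rw [sum_Icc_mobius hmu_self hmu_lt (mem_Icc.1 hw).2]]
  simp [hay]

theorem sum_Icc_bot_mobius [OrderBot P] [DecidableEq P] (hmu_self : ∀ p, mu p p = 1)
    (hmu_lt : ∀ p q : P, p < q → mu p q = -∑ r ∈ Ico p q, mu p r)
    (hmu_nle : ∀ p q : P, ¬ p ≤ q → mu p q = 0) (p q : P) :
    ∑ z ∈ Icc ⊥ q, mu p z = if p = q then 1 else 0 := by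
  have hrestrict : ∑ z ∈ Icc ⊥ q, mu p z = ∑ z ∈ Icc p q, mu p z :=
    (sum_subset (Icc_subset_Icc_left bot_le) fun z hz hz' =>
      hmu_nle p z fun hpz => hz' (mem_Icc.2 ⟨hpz, (mem_Icc.1 hz).2⟩)).symm
  rw [hrestrict]
  by_cases hpq : p ≤ q
  · exact sum_Icc_mobius hmu_self hmu_lt hpq
  · rw [Icc_eq_empty hpq, sum_empty, if_neg fun h => hpq h.le]

end Mobius

section LowerClosed

variable {P ι : Type*} [PartialOrder P] [OrderBot P] [LocallyFiniteOrder P] {x : ι → P}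

theorem sum_filter_comp_le_eq_sum_Icc_bot {M : Type*} [AddCommMonoid M] [Fintype ι]
    [DecidableRel ((· ≤ ·) : P → P → Prop)]
    (hinj : Function.Injective x) (hx : IsLowerSet (Set.range x)) {p : P}
    (hp : p ∈ Set.range x) (h : P → M) :
    ∑ k with x k ≤ p, h (x k) = ∑ z ∈ Icc ⊥ p, h z := by
  classical
  have himage : image x {k | x k ≤ p} = Icc ⊥ p := by
    ext z
    simp only [mem_image, mem_filter, mem_univ, true_and, mem_Icc, bot_le]
    refine ⟨fun ⟨k, hk, hkz⟩ => hkz ▸ hk, fun hz => ?_⟩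
    obtain ⟨k, rfl⟩ := hx hz hp
    exact ⟨k, hz, rfl⟩
  rw [← himage, sum_image hinj.injOn]

theorem filter_Icc_bot_forall_lt_not_le_eq_singleton [LinearOrder ι]
    (hord : ∀ i j, x i ≤ x j → i ≤ j) (hx : IsLowerSet (Set.range x)) (i : ι)
    [DecidablePred fun z => ∀ j, j < i → ¬ z ≤ x j] :
    {z ∈ Icc ⊥ (x i) | ∀ j, j < i → ¬ z ≤ x j} = {x i} := by
  refine eq_singleton_iff_unique_mem.2 ⟨?_, fun z hz => ?_⟩
  · simp only [mem_filter, mem_Icc, bot_le, le_refl, true_and]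
    exact fun j hji hij => (hord i j hij).not_gt hji
  · simp only [mem_filter, mem_Icc, bot_le, true_and] at hz
    obtain ⟨k, rfl⟩ := hx hz.1 ⟨i, rfl⟩
    obtain hki | rfl := (hord k i hz.1).lt_or_eq
    · exact absurd le_rfl (hz.2 k hki)
    · rfl

end LowerClosed

def zetaMatrix {P ι R : Type*} [LE P] [DecidableRel ((· ≤ ·) : P → P → Prop)] [Zero R] [One R]
    (x : ι → P) : Matrix ι ι R :=
  of fun i k => if x k ≤ x i then 1 else 0

def mobiusMatrix {P ι R : Type*} (mu : P → P → R) (x : ι → P) : Matrix ι ι R :=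
  of fun i k => mu (x k) (x i)

/-- The paper's `(f_d * μ)(0̂, z)`. -/
def mobiusConv {P R : Type*} [Preorder P] [OrderBot P] [LocallyFiniteOrder P] [Mul R]
    [AddCommMonoid R] (mu : P → P → R) (f : P → R) (z : P) : R :=
  ∑ w ∈ Icc ⊥ z, f w * mu w z

section Matrices

variable {P ι R : Type*} [Lattice P] [OrderBot P] [LocallyFiniteOrder P]
  [DecidableRel ((· ≤ ·) : P → P → Prop)] [Fintype ι] [DecidableEq ι] [CommRing R]
variable {mu : P → P → R} {x : ι → P}

theorem zetaMatrix_mul_mobiusMatrix (hmu_self : ∀ p, mu p p = 1)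
    (hmu_lt : ∀ p q : P, p < q → mu p q = -∑ r ∈ Ico p q, mu p r)
    (hmu_nle : ∀ p q : P, ¬ p ≤ q → mu p q = 0)
    (hinj : Function.Injective x) (hx : IsLowerSet (Set.range x)) :
    zetaMatrix x * mobiusMatrix mu x = 1 := by
  classical
  ext i j
  simp only [mul_apply, zetaMatrix, mobiusMatrix, of_apply, ite_mul, one_mul, zero_mul]
  rw [← sum_filter, sum_filter_comp_le_eq_sum_Icc_bot hinj hx ⟨i, rfl⟩,
    sum_Icc_bot_mobius hmu_self hmu_lt hmu_nle]
  simp only [one_apply, hinj.eq_iff, eq_comm]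

theorem of_inf_eq_zetaMatrix_mul_diagonal_mul_transpose (hmu_self : ∀ p, mu p p = 1)
    (hmu_lt : ∀ p q : P, p < q → mu p q = -∑ r ∈ Ico p q, mu p r) (f : P → R)
    (hinj : Function.Injective x) (hx : IsLowerSet (Set.range x)) :
    of (fun i j => f (x i ⊓ x j)) =
      zetaMatrix x * diagonal (fun k => mobiusConv mu f (x k)) * (zetaMatrix x)ᵀ := by
  ext i j
  have hterm : ∀ k,
      (zetaMatrix x * diagonal (fun k => mobiusConv mu f (x k)) : Matrix ι ι R) i k *
        (zetaMatrix x)ᵀ k j = if x k ≤ x i ⊓ x j then mobiusConv mu f (x k) else 0 := fun k => by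
    simp only [mul_diagonal, transpose_apply, zetaMatrix, of_apply, le_inf_iff]
    split_ifs <;> simp_all
  rw [of_apply, mul_apply, sum_congr rfl fun k _ => hterm k, ← sum_filter,
    sum_filter_comp_le_eq_sum_Icc_bot hinj hx (hx inf_le_left ⟨i, rfl⟩)]
  exact (sum_Icc_sum_Icc_mul_mobius hmu_self hmu_lt f bot_le).symm

end Matrices

namespace Matrix

variable {ι K : Type*} [Fintype ι]

theorem mul_mul_transpose_apply {R : Type*} [CommSemiring R] (N A : Matrix ι ι R) (i j : ι) :
    (N * A * Nᵀ) i j = ∑ α, ∑ β, N i α * N j β * A α β := by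
  simp only [mul_apply, transpose_apply, sum_mul]
  rw [sum_comm]
  exact sum_congr rfl fun α _ => sum_congr rfl fun β _ => by ring

variable [DecidableEq ι] [Field K]

theorem hasEigenvalue_toLin'_diagonal_inv_mul {B : Matrix ι ι K} {d : ι → K}
    (hd : ∀ i, d i ≠ 0) {lam : K} {u : ι → K} (hu : u ≠ 0)
    (hBu : B *ᵥ u = lam • diagonal d *ᵥ u) :
    Module.End.HasEigenvalue (toLin' (diagonal d⁻¹ * B)) lam := by
  have hdd : diagonal d⁻¹ * diagonal d = 1 := by
    rw [diagonal_mul_diagonal, ← diagonal_one]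
    exact congrArg diagonal (funext fun i => inv_mul_cancel₀ (hd i))
  refine Module.End.hasEigenvalue_of_hasEigenvector ⟨Module.End.mem_eigenspace_iff.2 ?_, hu⟩
  rw [toLin'_apply, ← mulVec_mulVec, hBu, mulVec_smul, mulVec_mulVec, hdd, one_mulVec]

theorem hasEigenvalue_of_mulVec_eq_smul_mul_diagonal_mul_transpose {A E N : Matrix ι ι K}
    {d : ι → K} (hEN : E * N = 1) (hd : ∀ i, d i ≠ 0) {lam : K} {v : ι → K} (hv : v ≠ 0)
    (hAv : A *ᵥ v = lam • (E * diagonal d * Eᵀ) *ᵥ v) :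
    Module.End.HasEigenvalue (toLin' (diagonal d⁻¹ * (N * A * Nᵀ))) lam := by
  have hNE : N * E = 1 := mul_eq_one_comm.1 hEN
  have hNEt : Nᵀ * Eᵀ = 1 := by rw [← transpose_mul, hEN, transpose_one]
  refine hasEigenvalue_toLin'_diagonal_inv_mul hd (u := Eᵀ *ᵥ v) ?_ ?_
  · intro h
    exact hv (by rw [← one_mulVec v, ← hNEt, ← mulVec_mulVec, h, mulVec_zero])
  · rw [mulVec_mulVec, Matrix.mul_assoc, hNEt, Matrix.mul_one, ← mulVec_mulVec, hAv,
      mulVec_smul, mulVec_mulVec, mulVec_mulVec, ← Matrix.mul_assoc, ← Matrix.mul_assoc, hNE,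
      Matrix.one_mul]

end Matrix

theorem gerschgorin_disks_join_wrt_meet_general
    {P : Type*} [Lattice P] [OrderBot P] [LocallyFiniteOrder P]
    [DecidableRel ((· ≤ ·) : P → P → Prop)]
    (mu : P → P → ℂ)
    (hmu_self : ∀ p, mu p p = 1)
    (hmu_lt : ∀ p q : P, p < q → mu p q = -∑ r ∈ Finset.Ico p q, mu p r)
    (hmu_nle : ∀ p q : P, ¬ p ≤ q → mu p q = 0)
    (f : P → ℂ)
    {n : ℕ} (x : Fin n → P) (hinj : Function.Injective x)
    (hord : ∀ i j, x i ≤ x j → i ≤ j)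
    (hlower : ∀ i (z : P), z ≤ x i → ∃ k, x k = z)
    (d : Fin n → ℂ)
    (hd : ∀ i, d i = ∑ z ∈ (Finset.Icc ⊥ (x i)).filter
        (fun z => ∀ j, j < i → ¬ z ≤ x j),
      ∑ w ∈ Finset.Icc ⊥ z, f w * mu w z)
    (hd0 : ∀ i, d i ≠ 0)
    (lam : ℂ) (v : Fin n → ℂ) (hv : v ≠ 0)
    (heig : (Matrix.of fun i j => f (x i ⊔ x j)).mulVec v =
      lam • (Matrix.of fun i j => f (x i ⊓ x j)).mulVec v) :
    ∃ i : Fin n,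
      ‖lam - (d i)⁻¹ * ∑ α : Fin n, ∑ β : Fin n,
          mu (x α) (x i) * mu (x β) (x i) * f (x α ⊔ x β)‖ ≤
        ‖d i‖⁻¹ * ∑ j ∈ Finset.univ.erase i,
          ‖∑ α : Fin n, ∑ β : Fin n,
            mu (x α) (x i) * mu (x β) (x j) * f (x α ⊔ x β)‖ := by
  have hx : IsLowerSet (Set.range x) := by
    rintro _ z hz ⟨i, rfl⟩
    exact hlower i z hz
  have hd_conv : d = fun i => mobiusConv mu f (x i) := funext fun i => by
    rw [hd, filter_Icc_bot_forall_lt_not_le_eq_singleton hord hx, sum_singleton, mobiusConv]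
  rw [of_inf_eq_zetaMatrix_mul_diagonal_mul_transpose hmu_self hmu_lt f hinj hx, ← hd_conv]
    at heig
  obtain ⟨i, hi⟩ := eigenvalue_mem_ball <|
    hasEigenvalue_of_mulVec_eq_smul_mul_diagonal_mul_transpose
      (zetaMatrix_mul_mobiusMatrix hmu_self hmu_lt hmu_nle hinj hx) hd0 hv heig
  refine ⟨i, ?_⟩
  simpa only [Metric.mem_closedBall, dist_eq_norm, diagonal_mul, mul_mul_transpose_apply,
    mobiusMatrix, of_apply, Pi.inv_apply, norm_mul, norm_inv, ← mul_sum] using hi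

/-- **Gerschgorin disks, dual problem.** For lower closed `S`, every
`(S)_f`-eigenvalue `λ` of `[S]_f` lies in one of the `n` disks centred at
`d i⁻¹ ∑_{α,β} μ(x α, x i) μ(x β, x i) f (x α ∨ x β)` with radius
`|d i|⁻¹ ∑_{j ≠ i} |∑_{α,β} μ(x α, x i) μ(x β, x j) f (x α ∨ x β)|`. -/
theorem gerschgorin_disks_join_wrt_meet
    {P : Type*} [Lattice P] [OrderBot P] [LocallyFiniteOrder P]
    [DecidableRel ((· ≤ ·) : P → P → Prop)]
    (mu : P → P → ℂ)
    (hmu_self : ∀ p, mu p p = 1)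
    (hmu_lt : ∀ p q : P, p < q → mu p q = -∑ r ∈ Finset.Ico p q, mu p r)
    (hmu_nle : ∀ p q : P, ¬ p ≤ q → mu p q = 0)
    (f : P → ℂ) (hf : ∀ p, f p ≠ 0)
    (hsemi : ∀ p q : P, f (p ⊓ q) * f (p ⊔ q) = f p * f q)
    {n : ℕ} (x : Fin n → P) (hinj : Function.Injective x)
    (hord : ∀ i j, x i ≤ x j → i ≤ j)
    (hlower : ∀ i (z : P), z ≤ x i → ∃ k, x k = z)
    (d : Fin n → ℂ)
    (hd : ∀ i, d i = ∑ z ∈ (Finset.Icc ⊥ (x i)).filter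
        (fun z => ∀ j, j < i → ¬ z ≤ x j),
      ∑ w ∈ Finset.Icc ⊥ z, f w * mu w z)
    (hd0 : ∀ i, d i ≠ 0)
    (lam : ℂ) (v : Fin n → ℂ) (hv : v ≠ 0)
    (heig : (Matrix.of fun i j => f (x i ⊔ x j)).mulVec v =
      lam • (Matrix.of fun i j => f (x i ⊓ x j)).mulVec v) :
    ∃ i : Fin n,
      ‖lam - (d i)⁻¹ * ∑ α : Fin n, ∑ β : Fin n,
          mu (x α) (x i) * mu (x β) (x i) * f (x α ⊔ x β)‖ ≤
        ‖d i‖⁻¹ * ∑ j ∈ Finset.univ.erase i,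
          ‖∑ α : Fin n, ∑ β : Fin n,
            mu (x α) (x i) * mu (x β) (x j) * f (x α ⊔ x β)‖ :=
  gerschgorin_disks_join_wrt_meet_general mu hmu_self hmu_lt hmu_nle f x hinj hord hlower d hd hd0
    lam v hv heig
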